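/- Let Π be a system with unique identifiers (id : Π → Ident injective), and let trusted satisfy the Σ Safety property. Define h_labels_p^τ := {s : s ⊆ I(Π) and id(p) ∈ s} for every τ, and h_quora_p^τ := {(q, q̂) : ∃τ' ≤ τ, q = trusted_p^{τ'}}, where q̂ is the finite set q viewed as a multiset. Then (h_quora, h_labels) satisfies the HΣ Safety property: for all p₁,p₂ ∈ Π, τ₁,τ₂ ∈ ℕ, (q₁,q̂₁) ∈ h_quora_{p₁}^{τ₁}, (q₂,q̂₂) ∈ h_quora_{p₂}^{τ₂}, and all Q₁ ⊆ S(q₁), Q₂ ⊆ S(q₂) with I(Q₁) = q̂₁ and I(Q₂) = q̂₂, one has Q₁ ∩ Q₂ ≠ ∅, where S(x) := {p ∈ Π : ∃τ, x ∈ h_labels_p^τ}. -/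

import Mathlib

/-- `idsOf ident S` is the multiset `I(S)` of identifiers of the processes
in the (necessarily finite) set `S`. -/
noncomputable def idsOf {Proc Ident : Type*} [Fintype Proc]
    (ident : Proc → Ident) (S : Set Proc) : Multiset Ident :=
  (Set.toFinite S).toFinset.val.map ident

/-! Σ Safety gives two trusted sets a common identifier `i`. A set of processes whose
identifiers are exactly those of a trusted set contains a process with identifier `i`,
and since identifiers are unique, the two such sets contain the same one. -/

section idsOf

variable {Proc Ident : Type*} [Fintype Proc] {ident : Proc → Ident}

theorem mem_idsOf {S : Set Proc} {i : Ident} : i ∈ idsOf ident S ↔ ∃ p ∈ S, ident p = i := by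
  simp [idsOf]

theorem inter_nonempty_of_idsOf_eq [DecidableEq Ident] (hinj : Function.Injective ident)
    {Q₁ Q₂ : Set Proc} {s₁ s₂ : Finset Ident} (h₁ : idsOf ident Q₁ = s₁.val)
    (h₂ : idsOf ident Q₂ = s₂.val) (hs : (s₁ ∩ s₂).Nonempty) : (Q₁ ∩ Q₂).Nonempty := by
  obtain ⟨i, hi⟩ := hs
  rw [Finset.mem_inter] at hi
  obtain ⟨p, hp, hpi⟩ := mem_idsOf.1 (h₁ ▸ hi.1 : i ∈ idsOf ident Q₁)
  obtain ⟨q, hq, hqi⟩ := mem_idsOf.1 (h₂ ▸ hi.2 : i ∈ idsOf ident Q₂)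
  exact ⟨p, hp, hinj (hqi.trans hpi.symm) ▸ hq⟩

end idsOf

theorem sigma_to_hs_safety_general
    {Proc Ident : Type*} [Fintype Proc] [DecidableEq Ident]
    (ident : Proc → Ident) (hinj : Function.Injective ident)
    (trusted : Proc → ℕ → Finset Ident)
    -- Σ Safety
    (sSafety : ∀ p q τ τ', (trusted p τ ∩ trusted q τ').Nonempty)
    (h_quora : Proc → ℕ → Set (Finset Ident × Multiset Ident))
    (hquo : ∀ p τ, h_quora p τ =
      {q | ∃ τ' ≤ τ, q = (trusted p τ', (trusted p τ').val)})
    (S : Finset Ident → Set Proc) :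
    -- HΣ Safety
    ∀ p₁ p₂ τ₁ τ₂ x₁ m₁ x₂ m₂,
      (x₁, m₁) ∈ h_quora p₁ τ₁ → (x₂, m₂) ∈ h_quora p₂ τ₂ →
      ∀ Q₁ Q₂ : Set Proc, Q₁ ⊆ S x₁ → Q₂ ⊆ S x₂ →
      idsOf ident Q₁ = m₁ → idsOf ident Q₂ = m₂ → (Q₁ ∩ Q₂).Nonempty := by
  intro p₁ p₂ τ₁ τ₂ x₁ m₁ x₂ m₂ h₁ h₂ Q₁ Q₂ _ _ hQ₁ hQ₂
  rw [hquo] at h₁ h₂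
  obtain ⟨σ₁, -, h₁⟩ := h₁
  obtain ⟨σ₂, -, h₂⟩ := h₂
  obtain ⟨-, rfl⟩ := Prod.mk.inj h₁
  obtain ⟨-, rfl⟩ := Prod.mk.inj h₂
  exact inter_nonempty_of_idsOf_eq hinj hQ₁ hQ₂ (sSafety p₁ p₂ σ₁ σ₂)

/-- In a system with unique identifiers, if `trusted` satisfies
the Σ Safety property, then the derived pair `(h_quora, h_labels)` satisfies
the HΣ Safety property. -/
theorem sigma_to_hs_safety
    {Proc Ident : Type*} [Fintype Proc] [Nonempty Proc] [DecidableEq Ident]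
    (ident : Proc → Ident) (hinj : Function.Injective ident)
    (trusted : Proc → ℕ → Finset Ident)
    -- Σ Safety
    (sSafety : ∀ p q τ τ', (trusted p τ ∩ trusted q τ').Nonempty)
    (h_labels : Proc → ℕ → Set (Finset Ident))
    (hlab : ∀ p τ, h_labels p τ =
      {s | s ⊆ Finset.univ.image ident ∧ ident p ∈ s})
    (h_quora : Proc → ℕ → Set (Finset Ident × Multiset Ident))
    (hquo : ∀ p τ, h_quora p τ =
      {q | ∃ τ' ≤ τ, q = (trusted p τ', (trusted p τ').val)})
    (S : Finset Ident → Set Proc)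
    (hS : ∀ x, S x = {p | ∃ τ, x ∈ h_labels p τ}) :
    -- HΣ Safety
    ∀ p₁ p₂ τ₁ τ₂ x₁ m₁ x₂ m₂,
      (x₁, m₁) ∈ h_quora p₁ τ₁ → (x₂, m₂) ∈ h_quora p₂ τ₂ →
      ∀ Q₁ Q₂ : Set Proc, Q₁ ⊆ S x₁ → Q₂ ⊆ S x₂ →
      idsOf ident Q₁ = m₁ → idsOf ident Q₂ = m₂ → (Q₁ ∩ Q₂).Nonempty :=
  sigma_to_hs_safety_general ident hinj trusted sSafety h_quora hquo S
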